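/- For γ > 0, t > 0 and x ≥ 0, the function g_{0,γ}(t,x) = (1/γ) exp(2x/γ + 2t/γ²) erfc(x/√(2t) + √(2t)/γ) converges pointwise, as γ ↓ 0, to the Gaussian kernel g(t,x) = (1/√(2πt)) e^{−x²/(2t)}. -/

import Mathlib

/-!
The Mills-ratio bounds `z ∫_z^∞ e^{-u²} du ≤ e^{-z²}/2 ≤ z (1 + 1/(2z²)) ∫_z^∞ e^{-u²} du`, obtained
by comparing `e^{-u²}` with the exact derivatives `u e^{-u²}` of `-e^{-u²}/2` and
`e^{-u²} (1 + 1/(2u²))` of `-e^{-u²}/(2u)`, give `erfc z ~ e^{-z²}/(z √π)` as `z → ∞`.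
With `a = x/√(2t)` and `z = a + √(2t)/γ` one has `2x/γ + 2t/γ² = z² - a²` and `1/γ = z/(γa + √(2t))`,
so the kernel equals `e^{-a²} · z e^{z²} erfc z / (γa + √(2t))`, which tends to
`e^{-a²}/(√π √(2t))` as `γ ↓ 0`.
-/

open MeasureTheory Set Filter

/-- The complementary error function. -/
noncomputable def erfc (z : ℝ) : ℝ := (2 / Real.sqrt Real.pi) * ∫ u in Ioi z, Real.exp (-u ^ 2)

open Real Topology

lemma tendsto_exp_neg_sq_atTop : Tendsto (fun u : ℝ => exp (-u ^ 2)) atTop (𝓝 0) :=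
  tendsto_exp_atBot.comp <| tendsto_neg_atBot_iff.mpr <| tendsto_pow_atTop two_ne_zero

lemma integrableOn_Ioi_exp_neg_sq (z : ℝ) : IntegrableOn (fun u : ℝ => exp (-u ^ 2)) (Ioi z) := by
  simpa using (integrable_exp_neg_mul_sq one_pos).integrableOn (s := Ioi z)

section MillsRatio

variable {z : ℝ}

lemma hasDerivAt_exp_neg_sq (u : ℝ) :
    HasDerivAt (fun u : ℝ => exp (-u ^ 2)) (-(2 * u) * exp (-u ^ 2)) u := by
  simpa [mul_comm] using ((hasDerivAt_pow 2 u).neg).exp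

lemma integrableOn_and_integral_Ioi_mul_exp_neg_sq (hz : 0 ≤ z) :
    IntegrableOn (fun u : ℝ => u * exp (-u ^ 2)) (Ioi z) ∧
      ∫ u in Ioi z, u * exp (-u ^ 2) = exp (-z ^ 2) / 2 := by
  have hderiv : ∀ u ∈ Ici z,
      HasDerivAt (fun u : ℝ => -exp (-u ^ 2) / 2) (u * exp (-u ^ 2)) u := fun u _ =>
    ((hasDerivAt_exp_neg_sq u).neg.div_const 2).congr_deriv (by ring)
  have hpos : ∀ u ∈ Ioi z, 0 ≤ u * exp (-u ^ 2) := fun u hu =>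
    mul_nonneg (hz.trans hu.le) (exp_pos _).le
  have hlim : Tendsto (fun u : ℝ => -exp (-u ^ 2) / 2) atTop (𝓝 0) := by
    simpa using tendsto_exp_neg_sq_atTop.neg.div_const 2
  refine ⟨integrableOn_Ioi_deriv_of_nonneg' hderiv hpos hlim, ?_⟩
  rw [integral_Ioi_of_hasDerivAt_of_nonneg' hderiv hpos hlim]
  ring

lemma integrableOn_and_integral_Ioi_exp_neg_sq_mul_one_add (hz : 0 < z) :
    IntegrableOn (fun u : ℝ => exp (-u ^ 2) * (1 + 1 / (2 * u ^ 2))) (Ioi z) ∧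
      ∫ u in Ioi z, exp (-u ^ 2) * (1 + 1 / (2 * u ^ 2)) = exp (-z ^ 2) / (2 * z) := by
  have hderiv : ∀ u ∈ Ici z, HasDerivAt (fun u : ℝ => -exp (-u ^ 2) / (2 * u))
      (exp (-u ^ 2) * (1 + 1 / (2 * u ^ 2))) u := by
    intro u hu
    have hu : u ≠ 0 := (hz.trans_le hu).ne'
    refine ((hasDerivAt_exp_neg_sq u).fun_neg.fun_div ((hasDerivAt_id' u).const_mul 2)
      (mul_ne_zero two_ne_zero hu)).congr_deriv ?_
    field_simp
    ring
  have hpos : ∀ u ∈ Ioi z, 0 ≤ exp (-u ^ 2) * (1 + 1 / (2 * u ^ 2)) := fun u _ => by positivity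
  have hlim : Tendsto (fun u : ℝ => -exp (-u ^ 2) / (2 * u)) atTop (𝓝 0) := by
    simpa using tendsto_exp_neg_sq_atTop.neg.div_atTop (tendsto_id.const_mul_atTop two_pos)
  refine ⟨integrableOn_Ioi_deriv_of_nonneg' hderiv hpos hlim, ?_⟩
  rw [integral_Ioi_of_hasDerivAt_of_nonneg' hderiv hpos hlim]
  ring

lemma mul_integral_Ioi_exp_neg_sq_le (hz : 0 ≤ z) :
    z * ∫ u in Ioi z, exp (-u ^ 2) ≤ exp (-z ^ 2) / 2 := by
  obtain ⟨hint, heq⟩ := integrableOn_and_integral_Ioi_mul_exp_neg_sq hz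
  rw [← heq, ← integral_const_mul]
  refine setIntegral_mono_on ((integrableOn_Ioi_exp_neg_sq z).const_mul z) hint
    measurableSet_Ioi fun u hu => ?_
  gcongr
  exact hu.le

lemma exp_neg_sq_div_le_integral_Ioi_exp_neg_sq (hz : 0 < z) :
    exp (-z ^ 2) / (2 * z) ≤ (1 + 1 / (2 * z ^ 2)) * ∫ u in Ioi z, exp (-u ^ 2) := by
  obtain ⟨hint, heq⟩ := integrableOn_and_integral_Ioi_exp_neg_sq_mul_one_add hz
  rw [← heq, ← integral_const_mul]
  refine setIntegral_mono_on hint ((integrableOn_Ioi_exp_neg_sq z).const_mul _)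
    measurableSet_Ioi fun u hu => ?_
  rw [mul_comm]
  gcongr
  exact hu.le

lemma tendsto_mul_exp_sq_mul_integral_Ioi_exp_neg_sq :
    Tendsto (fun z : ℝ => z * exp (z ^ 2) * ∫ u in Ioi z, exp (-u ^ 2)) atTop (𝓝 (1 / 2)) := by
  have hlower : Tendsto (fun z : ℝ => 1 / 2 / (1 + 1 / (2 * z ^ 2))) atTop (𝓝 (1 / 2)) := by
    have h : Tendsto (fun z : ℝ => 1 + 1 / (2 * z ^ 2)) atTop (𝓝 1) := by
      simpa using tendsto_const_nhds.add
        ((tendsto_pow_atTop two_ne_zero).const_mul_atTop (two_pos : (0 : ℝ) < 2)).inv_tendsto_atTop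
    simpa only [div_one] using! tendsto_const_nhds.div h one_ne_zero
  refine tendsto_of_tendsto_of_tendsto_of_le_of_le' hlower tendsto_const_nhds ?_ ?_
  · filter_upwards [eventually_gt_atTop 0] with z hz
    calc 1 / 2 / (1 + 1 / (2 * z ^ 2))
        = z * exp (z ^ 2) * (exp (-z ^ 2) / (2 * z)) / (1 + 1 / (2 * z ^ 2)) := by
          rw [exp_neg]; field_simp
      _ ≤ z * exp (z ^ 2) * ((1 + 1 / (2 * z ^ 2)) * ∫ u in Ioi z, exp (-u ^ 2)) /
            (1 + 1 / (2 * z ^ 2)) := by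
          gcongr; exact exp_neg_sq_div_le_integral_Ioi_exp_neg_sq hz
      _ = z * exp (z ^ 2) * ∫ u in Ioi z, exp (-u ^ 2) := by field_simp
  · filter_upwards [eventually_ge_atTop 0] with z hz
    calc z * exp (z ^ 2) * ∫ u in Ioi z, exp (-u ^ 2)
        = exp (z ^ 2) * (z * ∫ u in Ioi z, exp (-u ^ 2)) := by ring
      _ ≤ exp (z ^ 2) * (exp (-z ^ 2) / 2) := by
          gcongr; exact mul_integral_Ioi_exp_neg_sq_le hz
      _ = 1 / 2 := by rw [exp_neg]; field_simp

end MillsRatio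

lemma tendsto_mul_exp_sq_mul_erfc_atTop :
    Tendsto (fun z : ℝ => z * exp (z ^ 2) * erfc z) atTop (𝓝 (1 / √π)) := by
  have h := tendsto_mul_exp_sq_mul_integral_Ioi_exp_neg_sq.const_mul (2 / √π)
  rw [show 2 / √π * (1 / 2) = 1 / √π by ring] at h
  refine h.congr fun z => ?_
  rw [erfc]
  ring

lemma one_div_mul_exp_mul_eq {a c γ : ℝ} (hγ : γ ≠ 0) (hden : γ * a + c ≠ 0) (F : ℝ) :
    1 / γ * exp (2 * (a * c) / γ + c ^ 2 / γ ^ 2) * F =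
      exp (-a ^ 2) * ((a + c / γ) * exp ((a + c / γ) ^ 2) * F / (γ * a + c)) := by
  have hexp : exp (2 * (a * c) / γ + c ^ 2 / γ ^ 2) = exp (-a ^ 2) * exp ((a + c / γ) ^ 2) := by
    rw [← exp_add]
    congr 1
    field_simp
    ring
  rw [hexp]
  field_simp

theorem g_zero_gamma_tendsto_gauss_general (t x : ℝ) (ht : 0 < t) :
    Tendsto (fun γ : ℝ =>
        (1 / γ) * Real.exp (2 * x / γ + 2 * t / γ ^ 2) *
          erfc (x / Real.sqrt (2 * t) + Real.sqrt (2 * t) / γ))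
      (nhdsWithin 0 (Ioi 0))
      (nhds ((1 / Real.sqrt (2 * Real.pi * t)) * Real.exp (-x ^ 2 / (2 * t)))) := by
  have hc : 0 < √(2 * t) := sqrt_pos.mpr (by positivity)
  set c := √(2 * t)
  set a := x / c
  have hac : a * c = x := div_mul_cancel₀ x hc.ne'
  have hcc : c ^ 2 = 2 * t := sq_sqrt (by positivity)
  have hz : Tendsto (fun γ : ℝ => a + c / γ) (𝓝[>] 0) atTop :=
    tendsto_atTop_add_const_left _ a (tendsto_inv_nhdsGT_zero.const_mul_atTop hc)
  have hden : Tendsto (fun γ : ℝ => γ * a + c) (𝓝[>] 0) (𝓝 c) := by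
    refine Tendsto.mono_left ?_ nhdsWithin_le_nhds
    exact (by fun_prop : Continuous fun γ : ℝ => γ * a + c).tendsto' 0 c (by simp)
  have hlim : exp (-a ^ 2) * (1 / √π / c) = 1 / √(2 * π * t) * exp (-x ^ 2 / (2 * t)) := by
    rw [show 2 * π * t = π * (2 * t) by ring, sqrt_mul pi_pos.le, ← hcc, sqrt_sq hc.le, ← hac]
    field_simp
  rw [← hlim]
  refine (((tendsto_mul_exp_sq_mul_erfc_atTop.comp hz).div hden hc.ne').const_mul _).congr' ?_
  filter_upwards [self_mem_nhdsWithin, hden.eventually_ne hc.ne'] with γ (hγ : 0 < γ) hγc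
  rw [← hac, ← hcc, one_div_mul_exp_mul_eq hγ.ne' hγc]
  rfl

/-- As `γ ↓ 0`, the sticky boundary kernel `g_{0,γ}(t,x)` converges pointwise to the
Gaussian kernel `g(t,x)`. -/
theorem g_zero_gamma_tendsto_gauss (t x : ℝ) (ht : 0 < t) (hx : 0 ≤ x) :
    Tendsto (fun γ : ℝ =>
        (1 / γ) * Real.exp (2 * x / γ + 2 * t / γ ^ 2) *
          erfc (x / Real.sqrt (2 * t) + Real.sqrt (2 * t) / γ))
      (nhdsWithin 0 (Ioi 0))
      (nhds ((1 / Real.sqrt (2 * Real.pi * t)) * Real.exp (-x ^ 2 / (2 * t)))) :=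
  g_zero_gamma_tendsto_gauss_general t x ht
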